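/- arXiv:2302.12855 — 4 statements merged into one kernel-verified Lean document; each statement's English description precedes it below -/
import Mathlib

section
/- If n > d ≥ 1 and r ≥ 2, then P(r·n, r·d) ≥ P(n, d)^r. -/
/-- The Chebyshev distance between two permutations of `{1,…,n}`
(represented as permutations of `Fin n`): `max_i |σ(i) − τ(i)|`. -/
def permDist {n : ℕ} (σ τ : Equiv.Perm (Fin n)) : ℕ :=
  Finset.univ.sup fun i => Nat.dist (σ i : ℕ) (τ i : ℕ)

/-- `P n d` is the maximum cardinality of a set of permutations of `{1,…,n}`
whose pairwise Chebyshev distance is at least `d`. -/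
noncomputable def P (n d : ℕ) : ℕ :=
  sSup {k | ∃ A : Finset (Equiv.Perm (Fin n)),
    (∀ σ ∈ A, ∀ τ ∈ A, σ ≠ τ → d ≤ permDist σ τ) ∧ A.card = k}


/-!
A code of permutations of `Fin n` with minimum distance `d` and an `r`-tuple of its codewords
`σ₀, …, σᵣ₋₁` give the permutation of `Fin (r * n)` sending `s + r * q` to `s + r * σₛ(q)`.
Positions in residue class `s` mod `r` only see `σₛ`, and there every distance is multiplied by
`r`; so two distinct tuples, differing in some `σₛ`, give permutations at distance at least
`r * d`. This yields a code of size `|A| ^ r` and minimum distance `r * d` in `Fin (r * n)`.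
-/

open Finset

lemma dist_le_permDist {n : ℕ} (σ τ : Equiv.Perm (Fin n)) (i : Fin n) :
    Nat.dist (σ i) (τ i) ≤ permDist σ τ :=
  le_sup (f := fun i => Nat.dist (σ i : ℕ) (τ i)) (mem_univ i)

section Interleave

variable {n r : ℕ}

variable (n r) in
def interleaveEquiv : Fin n × Fin r ≃ Fin (r * n) :=
  finProdFinEquiv.trans (finCongr (mul_comm n r))

lemma interleaveEquiv_val (q : Fin n) (s : Fin r) :
    (interleaveEquiv n r (q, s) : ℕ) = s + r * q := rfl

def interleavePerm (f : Fin r → Equiv.Perm (Fin n)) : Equiv.Perm (Fin (r * n)) :=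
  (interleaveEquiv n r).permCongr (Equiv.prodCongrLeft f)

lemma interleavePerm_apply (f : Fin r → Equiv.Perm (Fin n)) (q : Fin n) (s : Fin r) :
    interleavePerm f (interleaveEquiv n r (q, s)) = interleaveEquiv n r (f s q, s) := by
  simp [interleavePerm, Equiv.permCongr_apply, Equiv.prodCongrLeft_apply]

lemma interleavePerm_injective : Function.Injective (interleavePerm (n := n) (r := r)) := by
  intro f g h
  ext s q
  have := congr($h (interleaveEquiv n r (q, s)))
  simp only [interleavePerm_apply, EmbeddingLike.apply_eq_iff_eq, Prod.mk.injEq] at this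
  rw [this.1]

lemma dist_interleavePerm_apply (f g : Fin r → Equiv.Perm (Fin n)) (q : Fin n) (s : Fin r) :
    Nat.dist (interleavePerm f (interleaveEquiv n r (q, s)))
      (interleavePerm g (interleaveEquiv n r (q, s))) = r * Nat.dist (f s q) (g s q) := by
  rw [interleavePerm_apply, interleavePerm_apply, interleaveEquiv_val, interleaveEquiv_val,
    Nat.dist_add_add_left, Nat.dist_mul_left]

lemma mul_permDist_le_permDist_interleavePerm (f g : Fin r → Equiv.Perm (Fin n)) (s : Fin r) :
    r * permDist (f s) (g s) ≤ permDist (interleavePerm f) (interleavePerm g) := by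
  rw [permDist, apply_sup_eq_sup_comp_of_linearOrder (r * ·)
    (fun _ _ h => Nat.mul_le_mul_left r h) (mul_zero r)]
  exact Finset.sup_le fun q _ =>
    (dist_interleavePerm_apply f g q s).symm.trans_le (dist_le_permDist _ _ _)

end Interleave

section Code

variable {n d : ℕ}

def IsPermCode (d : ℕ) (A : Finset (Equiv.Perm (Fin n))) : Prop :=
  ∀ σ ∈ A, ∀ τ ∈ A, σ ≠ τ → d ≤ permDist σ τ

variable (n d) in
lemma bddAbove_card_isPermCode :
    BddAbove {k | ∃ A : Finset (Equiv.Perm (Fin n)), IsPermCode d A ∧ A.card = k} :=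
  ⟨Fintype.card (Equiv.Perm (Fin n)), by rintro k ⟨A, -, rfl⟩; exact A.card_le_univ⟩

lemma IsPermCode.card_le_P {A : Finset (Equiv.Perm (Fin n))} (hA : IsPermCode d A) :
    A.card ≤ P n d :=
  le_csSup (bddAbove_card_isPermCode n d) ⟨A, hA, rfl⟩

variable (n d) in
lemma exists_isPermCode_card_eq_P :
    ∃ A : Finset (Equiv.Perm (Fin n)), IsPermCode d A ∧ A.card = P n d :=
  Nat.sSup_mem (s := {k | ∃ A : Finset (Equiv.Perm (Fin n)), IsPermCode d A ∧ A.card = k})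
    ⟨0, ∅, by simp [IsPermCode]⟩ (bddAbove_card_isPermCode n d)

def interleaveCode (r : ℕ) (A : Finset (Equiv.Perm (Fin n))) :
    Finset (Equiv.Perm (Fin (r * n))) :=
  (Fintype.piFinset fun _ : Fin r => A).image interleavePerm

lemma card_interleaveCode (r : ℕ) (A : Finset (Equiv.Perm (Fin n))) :
    (interleaveCode r A).card = A.card ^ r := by
  rw [interleaveCode, card_image_of_injective _ interleavePerm_injective, Fintype.card_piFinset,
    prod_const, card_univ, Fintype.card_fin]

lemma IsPermCode.interleaveCode {A : Finset (Equiv.Perm (Fin n))} (hA : IsPermCode d A)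
    (r : ℕ) : IsPermCode (r * d) (interleaveCode r A) := by
  simp only [IsPermCode, _root_.interleaveCode, mem_image, Fintype.mem_piFinset]
  rintro _ ⟨f, hf, rfl⟩ _ ⟨g, hg, rfl⟩ hne
  obtain ⟨s, hs⟩ := Function.ne_iff.mp fun h => hne (congrArg interleavePerm h)
  exact (Nat.mul_le_mul_left r (hA _ (hf s) _ (hg s) hs)).trans
    (mul_permDist_le_permDist_interleavePerm f g s)

end Code

theorem stmt2_general (n d r : ℕ) :
    P n d ^ r ≤ P (r * n) (r * d) := by
  obtain ⟨A, hA, hcard⟩ := exists_isPermCode_card_eq_P n d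
  calc P n d ^ r = (interleaveCode r A).card := by rw [card_interleaveCode, hcard]
    _ ≤ P (r * n) (r * d) := (hA.interleaveCode r).card_le_P

/-- If `n > d ≥ 1` and `r ≥ 2`, then `P(r·n, r·d) ≥ P(n, d)^r`. -/
theorem stmt2 (n d r : ℕ) (hd : 1 ≤ d) (hn : d < n) (hr : 2 ≤ r) :
    P n d ^ r ≤ P (r * n) (r * d) :=
  stmt2_general n d r
end

section
/- If n = a·d + b where a ≥ 1, d ≥ 1 and 0 ≤ b < d, then P(n, d) ≥ ((a+1)!)^b · (a!)^{d−b}. -/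
/-!
Permutations that map every residue class mod `d` onto itself form the product of the
symmetric groups of those classes; for `n = a·d + b` there are `b` classes of size `a + 1`
and `d − b` of size `a`. Two distinct such permutations differ at some `i`, where the two
values are congruent mod `d`, so their Chebyshev distance is at least `d`.
-/

open Equiv Finset Nat

theorem Nat.le_dist_of_modEq {d x y : ℕ} (hmod : x ≡ y [MOD d]) (hne : x ≠ y) :
    d ≤ Nat.dist x y := by
  wlog hxy : x < y generalizing x y
  · rw [Nat.dist_comm]
    exact this hmod.symm hne.symm (by omega)
  rw [Nat.dist_eq_sub_of_le hxy.le]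
  exact Nat.le_of_dvd (by omega) ((Nat.modEq_iff_dvd' hxy.le).mp hmod)

theorem le_permDist_of_modEq {n d : ℕ} {σ τ : Perm (Fin n)} (hne : σ ≠ τ)
    (hmod : ∀ i, (σ i : ℕ) ≡ τ i [MOD d]) : d ≤ permDist σ τ := by
  obtain ⟨i, hi⟩ : ∃ i, σ i ≠ τ i := by
    by_contra! h
    exact hne (Equiv.ext h)
  unfold permDist
  exact (Nat.le_dist_of_modEq (hmod i) (Fin.val_injective.ne hi)).trans
    (Finset.le_sup (f := fun j => Nat.dist (σ j : ℕ) (τ j : ℕ)) (Finset.mem_univ i))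

theorem pairwise_le_permDist_of_modEq (n d : ℕ) :
    ({σ | ∀ i, (σ i : ℕ) ≡ i [MOD d]} : Set (Perm (Fin n))).Pairwise
      fun σ τ => d ≤ permDist σ τ :=
  fun _ hσ _ hτ hne => le_permDist_of_modEq hne fun i => (hσ i).trans (hτ i).symm

theorem card_le_P {n d : ℕ} (A : Finset (Perm (Fin n)))
    (hA : (A : Set (Perm (Fin n))).Pairwise fun σ τ => d ≤ permDist σ τ) : #A ≤ P n d := by
  refine le_csSup ⟨Fintype.card (Perm (Fin n)), ?_⟩ ⟨A, hA, rfl⟩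
  rintro k ⟨B, -, rfl⟩
  exact Finset.card_le_univ B

theorem Fin.card_subtype_mod_eq {n d : ℕ} (hd : 0 < d) {r : ℕ} (hr : r < d) :
    Fintype.card {i : Fin n // (i : ℕ) % d = r} = n / d + if r < n % d then 1 else 0 := by
  rw [← Nat.mod_eq_of_lt hr, ← Nat.count_modEq_card _ hd, Nat.count_eq_card_filter_range,
    Fintype.card_subtype, ← Finset.card_map Fin.valEmbedding]
  congr 1
  ext x
  rw [mem_filter, mem_range, Nat.ModEq]
  simp [Fin.exists_iff, and_comm]

theorem Fin.prod_ite_val_lt {M : Type*} [CommMonoid M] {d b : ℕ} (hb : b ≤ d) (x y : M) :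
    ∏ r : Fin d, (if (r : ℕ) < b then x else y) = x ^ b * y ^ (d - b) := by
  rw [Fin.prod_univ_eq_prod_range (fun r => if r < b then x else y),
    ← Finset.prod_range_mul_prod_Ico _ hb,
    Finset.prod_congr rfl fun r hr => if_pos (Finset.mem_range.mp hr),
    Finset.prod_congr rfl fun r hr => if_neg (Finset.mem_Ico.mp hr).1.not_gt]
  simp

theorem card_perm_modEq {n d : ℕ} (hd : 0 < d) :
    #{σ : Perm (Fin n) | ∀ i, (σ i : ℕ) ≡ i [MOD d]} =
      ∏ r : Fin d, (n / d + if (r : ℕ) < n % d then 1 else 0)! := by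
  let f : Fin n → Fin d := fun i => ⟨i % d, Nat.mod_lt _ hd⟩
  have hf (σ : Perm (Fin n)) : (∀ i, (σ i : ℕ) ≡ i [MOD d]) ↔ f ∘ σ = f := by
    simp only [funext_iff, Function.comp_apply, Fin.ext_iff, f, Nat.ModEq]
  rw [← Fintype.card_subtype, Fintype.card_congr (Equiv.subtypeEquivRight hf),
    DomMulAct.stabilizer_card]
  refine Finset.prod_congr rfl fun r _ => ?_
  rw [← Fin.card_subtype_mod_eq hd r.2]
  exact congrArg _ (Fintype.card_congr (Equiv.subtypeEquivRight fun i => Fin.ext_iff))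

theorem stmt5_general (n a d b : ℕ) (hd : 1 ≤ d) (hb : b < d)
    (hn : n = a * d + b) :
    (Nat.factorial (a + 1)) ^ b * (Nat.factorial a) ^ (d - b) ≤ P n d := by
  have hdiv : n / d = a := by
    rw [hn, add_comm, Nat.add_mul_div_right _ _ hd, Nat.div_eq_of_lt hb, zero_add]
  have hmod : n % d = b := by
    rw [hn, add_comm, Nat.add_mul_mod_self_right, Nat.mod_eq_of_lt hb]
  calc (a + 1)! ^ b * a ! ^ (d - b) = ∏ r : Fin d, (if (r : ℕ) < b then (a + 1)! else a !) :=
        (Fin.prod_ite_val_lt hb.le _ _).symm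
    _ = #{σ : Perm (Fin n) | ∀ i, (σ i : ℕ) ≡ i [MOD d]} := by
        rw [card_perm_modEq hd, hdiv, hmod]
        exact Finset.prod_congr rfl fun r _ => by split_ifs <;> rfl
    _ ≤ P n d := card_le_P _ (by simpa using pairwise_le_permDist_of_modEq n d)

/-- If `n = a·d + b` with `a ≥ 1`, `d ≥ 1`, `0 ≤ b < d`, then
`P(n, d) ≥ ((a+1)!)^b · (a!)^{d−b}`. -/
theorem stmt5 (n a d b : ℕ) (ha : 1 ≤ a) (hd : 1 ≤ d) (hb : b < d)
    (hn : n = a * d + b) :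
    (Nat.factorial (a + 1)) ^ b * (Nat.factorial a) ^ (d - b) ≤ P n d :=
  stmt5_general n a d b hd hb hn
end

section
/- For even d with 2d ≥ n ≥ d ≥ 2, P(n, d) · V(n+1, d/2) ≤ (n+1)!, i.e., P(n, d) ≤ (n+1)! / V(n+1, d/2). -/
/-- `V n d` is the number of permutations `π` of `{1,…,n}` with `|π(i) − i| ≤ d`
for all `i`. -/
def V (n d : ℕ) : ℕ :=
  (Finset.univ.filter fun π : Equiv.Perm (Fin n) =>
    ∀ i : Fin n, Nat.dist (π i : ℕ) (i : ℕ) ≤ d).card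

/-!
Extend each permutation `σ` of `{0,…,n-1}` to a permutation `σ*` of `{0,…,n}` by sending the new
point `n` to the value `d` and shifting the values `≥ d` of `σ` up by one. If `|σ i - τ i| ≥ d`, then
`σ i` and `τ i` cannot both be `< d`, nor (as `n ≤ 2d`) both be `≥ d`, so the shift separates them
by one more: a code of minimum distance `d` in `Sₙ` becomes one of minimum distance `d + 1` in
`Sₙ₊₁`. The Chebyshev balls of radius `⌊d/2⌋` around its words are then pairwise disjoint, and by
right invariance each has `V(n+1, ⌊d/2⌋)` elements.
-/

open Equiv Finset

section PermDist

variable {n : ℕ}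

theorem permDist_le_iff {σ τ : Perm (Fin n)} {e : ℕ} :
    permDist σ τ ≤ e ↔ ∀ i, Nat.dist (σ i) (τ i) ≤ e := by
  simp [permDist, Finset.sup_le_iff]

theorem permDist_comm (σ τ : Perm (Fin n)) : permDist σ τ = permDist τ σ := by
  simp only [permDist, Nat.dist_comm]

theorem permDist_triangle (σ π τ : Perm (Fin n)) :
    permDist σ τ ≤ permDist σ π + permDist π τ :=
  permDist_le_iff.2 fun i =>
    (Nat.dist.triangle_inequality _ (π i) _).trans <|
      add_le_add (permDist_le_iff.1 le_rfl i) (permDist_le_iff.1 le_rfl i)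

def permBall (ρ : Perm (Fin n)) (e : ℕ) : Finset (Perm (Fin n)) :=
  univ.filter fun π => permDist π ρ ≤ e

theorem card_permBall (ρ : Perm (Fin n)) (e : ℕ) : (permBall ρ e).card = V n e := by
  rw [V]
  refine (card_equiv (Equiv.mulRight ρ) fun π => ?_).symm
  simp only [permBall, mem_filter, mem_univ, true_and, permDist_le_iff, coe_mulRight,
    Perm.mul_apply]
  exact (ρ.forall_congr_right (q := fun i => Nat.dist (π i : ℕ) i ≤ e)).symm

theorem card_mul_V_le_factorial {e : ℕ} (A : Finset (Perm (Fin n)))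
    (hA : ∀ σ ∈ A, ∀ τ ∈ A, σ ≠ τ → 2 * e < permDist σ τ) :
    A.card * V n e ≤ n.factorial := by
  have hdisj : (A : Set (Perm (Fin n))).PairwiseDisjoint (permBall · e) := by
    intro σ hσ τ hτ hστ
    refine disjoint_left.2 fun π hπσ hπτ => (hA σ hσ τ hτ hστ).not_ge ?_
    simp only [permBall, mem_filter] at hπσ hπτ
    calc permDist σ τ ≤ permDist σ π + permDist π τ := permDist_triangle σ π τ
      _ ≤ 2 * e := by rw [permDist_comm σ π]; omega
  calc A.card * V n e = (A.biUnion (permBall · e)).card := by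
        simp [card_biUnion hdisj, card_permBall]
    _ ≤ Fintype.card (Perm (Fin n)) := card_le_univ _
    _ = n.factorial := by simp [Fintype.card_perm]

theorem exists_card_eq_P (n d : ℕ) : ∃ A : Finset (Perm (Fin n)),
    (∀ σ ∈ A, ∀ τ ∈ A, σ ≠ τ → d ≤ permDist σ τ) ∧ A.card = P n d := by
  refine Nat.sSup_mem (s := {k | ∃ A : Finset (Perm (Fin n)),
    (∀ σ ∈ A, ∀ τ ∈ A, σ ≠ τ → d ≤ permDist σ τ) ∧ A.card = k}) ?_ ?_
  · exact ⟨0, ∅, by simp, rfl⟩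
  · refine ⟨(univ : Finset (Perm (Fin n))).card, ?_⟩
    rintro k ⟨A, -, rfl⟩
    exact card_le_univ A

end PermDist

section PermSnoc

variable {n : ℕ}

theorem Fin.val_succAbove (c : Fin (n + 1)) (x : Fin n) :
    (c.succAbove x : ℕ) = if (x : ℕ) < c then (x : ℕ) else (x : ℕ) + 1 := by
  split_ifs with h
  · rw [Fin.succAbove_of_castSucc_lt c x h, Fin.val_castSucc]
  · rw [Fin.succAbove_of_le_castSucc c x (not_lt.1 h), Fin.val_succ]

theorem Fin.dist_succAbove (c : Fin (n + 1)) (hn : n ≤ 2 * c) {x y : Fin n}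
    (hxy : (c : ℕ) ≤ Nat.dist x y) :
    Nat.dist (c.succAbove x) (c.succAbove y) = Nat.dist x y + 1 := by
  have := x.isLt
  have := y.isLt
  rw [Fin.val_succAbove, Fin.val_succAbove]
  unfold Nat.dist at *
  split_ifs <;> omega

/-- The permutation of `Fin (n + 1)` sending `Fin.last n` to `c` and `i.castSucc` to
`c.succAbove (σ i)`. -/
def permSnoc (c : Fin (n + 1)) (σ : Perm (Fin n)) : Perm (Fin (n + 1)) :=
  finSuccEquivLast.trans ((Equiv.optionCongr σ).trans (finSuccEquiv' c).symm)

@[simp]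
theorem permSnoc_castSucc (c : Fin (n + 1)) (σ : Perm (Fin n)) (i : Fin n) :
    permSnoc c σ i.castSucc = c.succAbove (σ i) := by
  simp [permSnoc]

theorem permSnoc_injective (c : Fin (n + 1)) : Function.Injective (permSnoc c) := by
  intro σ τ h
  exact Equiv.ext fun i => by simpa using congr($h i.castSucc)

theorem succ_le_permDist_permSnoc (c : Fin (n + 1)) (hn : n ≤ 2 * c) {σ τ : Perm (Fin n)}
    (hστ : σ ≠ τ) (h : (c : ℕ) ≤ permDist σ τ) :
    (c : ℕ) + 1 ≤ permDist (permSnoc c σ) (permSnoc c τ) := by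
  obtain ⟨i₀, -⟩ : ∃ i, σ i ≠ τ i := by
    by_contra! h
    exact hστ (Equiv.ext h)
  obtain ⟨i, -, hi⟩ := exists_mem_eq_sup univ ⟨i₀, mem_univ _⟩
    fun i => Nat.dist (σ i : ℕ) (τ i : ℕ)
  rw [permDist, hi] at h
  calc (c : ℕ) + 1 ≤ Nat.dist (σ i : ℕ) (τ i : ℕ) + 1 := by omega
    _ = Nat.dist (permSnoc c σ i.castSucc : ℕ) (permSnoc c τ i.castSucc : ℕ) := by
        rw [permSnoc_castSucc, permSnoc_castSucc, Fin.dist_succAbove c hn h]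
    _ ≤ permDist (permSnoc c σ) (permSnoc c τ) :=
        le_sup (f := fun j => Nat.dist (permSnoc c σ j : ℕ) (permSnoc c τ j)) (mem_univ _)

end PermSnoc

theorem stmt11_general (n d : ℕ) (hnd : d ≤ n)
    (hn : n ≤ 2 * d) :
    P n d * V (n + 1) (d / 2) ≤ Nat.factorial (n + 1) := by
  obtain ⟨A, hA, hcard⟩ := exists_card_eq_P n d
  let c : Fin (n + 1) := ⟨d, Nat.lt_succ_of_le hnd⟩
  have hc : (c : ℕ) = d := rfl
  have hsep : ∀ σ ∈ A.map ⟨permSnoc c, permSnoc_injective c⟩,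
      ∀ τ ∈ A.map ⟨permSnoc c, permSnoc_injective c⟩, σ ≠ τ → 2 * (d / 2) < permDist σ τ := by
    simp only [mem_map, Function.Embedding.coeFn_mk]
    rintro _ ⟨σ, hσ, rfl⟩ _ ⟨τ, hτ, rfl⟩ hστ
    have hne : σ ≠ τ := ne_of_apply_ne (permSnoc c) hστ
    have := succ_le_permDist_permSnoc c hn hne (hA σ hσ τ hτ hne)
    omega
  simpa [hcard] using card_mul_V_le_factorial _ hsep

/-- For even `d` with `2d ≥ n ≥ d ≥ 2`, `P(n, d) · V(n+1, d/2) ≤ (n+1)!`. -/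
theorem stmt11 (n d : ℕ) (heven : Even d) (hd : 2 ≤ d) (hnd : d ≤ n)
    (hn : n ≤ 2 * d) :
    P n d * V (n + 1) (d / 2) ≤ Nat.factorial (n + 1) :=
  stmt11_general n d hnd hn
end

section
/- If d divides n (with n ≥ d ≥ 1) and d ≥ m ≥ 2, then for every integer i with 0 ≤ i ≤ d − m, P(n − i, m, d) = (n/d)^m. -/
/-- The Chebyshev distance between two functions on `{1,…,m}`
(represented on `Fin m`): `max_i |σ(i) − τ(i)|`. -/
def cheb {m : ℕ} (σ τ : Fin m → ℕ) : ℕ :=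
  Finset.univ.sup fun i => Nat.dist (σ i) (τ i)

/-- `Pnm n m d` is the maximum cardinality of a set of injective functions
from `{1,…,m}` to `{1,…,n}` whose pairwise Chebyshev distance is at least
`d`. -/
noncomputable def Pnm (n m d : ℕ) : ℕ :=
  sSup {k | ∃ A : Finset (Fin m → ℕ),
    (∀ σ ∈ A, Function.Injective σ ∧ ∀ i, σ i ∈ Finset.Icc 1 n) ∧
    (∀ σ ∈ A, ∀ τ ∈ A, σ ≠ τ → d ≤ cheb σ τ) ∧ A.card = k}

/-!
Cut each coordinate range `{1, …, q d}` into `q` blocks of `d` consecutive integers. Two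
codewords whose coordinates lie blockwise in the same blocks are at Chebyshev distance `< d`, so a
code of minimum distance `d` has at most `q ^ m` words. Conversely, the words
`j ↦ b j * d + j + 1` for `b : Fin m → Fin q` are injective when `m ≤ d`, pairwise at distance
`≥ d`, and take values in `{1, …, q d − (d − m)}`, so the bound is attained on `{1, …, N}` for
every `N` in between.
-/

open Finset

theorem Nat.dist_lt_of_div_eq {a b d : ℕ} (hd : 0 < d) (h : a / d = b / d) : Nat.dist a b < d := by
  have ha := Nat.div_add_mod a d
  have hb := Nat.div_add_mod b d
  have := Nat.mod_lt a hd
  have := Nat.mod_lt b hd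
  rw [h] at ha
  unfold Nat.dist
  omega

theorem Nat.le_dist_mul_add {b b' : ℕ} (d r : ℕ) (h : b ≠ b') :
    d ≤ Nat.dist (b * d + r) (b' * d + r) := by
  rw [Nat.dist_add_add_right, Nat.dist_mul_right]
  exact Nat.le_mul_of_pos_left d (Nat.dist_pos_of_ne h)

section Cheb

variable {m : ℕ}

@[simp]
theorem cheb_self (σ : Fin m → ℕ) : cheb σ σ = 0 := by
  simp [cheb]

theorem dist_le_cheb (σ τ : Fin m → ℕ) (i : Fin m) : Nat.dist (σ i) (τ i) ≤ cheb σ τ :=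
  Finset.le_sup (f := fun i => Nat.dist (σ i) (τ i)) (mem_univ i)

theorem cheb_lt_iff {σ τ : Fin m → ℕ} {d : ℕ} (hd : 0 < d) :
    cheb σ τ < d ↔ ∀ i, Nat.dist (σ i) (τ i) < d := by
  simp [cheb, Finset.sup_lt_iff (show ⊥ < d from hd)]

theorem card_le_pow_of_le_cheb {A : Finset (Fin m → ℕ)} {N q d : ℕ} (hd : 0 < d)
    (hN : N ≤ q * d) (hrange : ∀ σ ∈ A, ∀ i, σ i ∈ Icc 1 N)
    (hsep : ∀ σ ∈ A, ∀ τ ∈ A, σ ≠ τ → d ≤ cheb σ τ) :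
    #A ≤ q ^ m := by
  let block : (Fin m → ℕ) → Fin m → ℕ := fun σ i => (σ i - 1) / d
  have hmaps : Set.MapsTo block A ↑(Fintype.piFinset fun _ : Fin m => range q) := by
    intro σ hσ
    simp only [mem_coe, Fintype.mem_piFinset, mem_range]
    intro i
    have := mem_Icc.mp (hrange σ hσ i)
    exact (Nat.div_lt_iff_lt_mul hd).mpr (by omega)
  have hinj : Set.InjOn block A := by
    intro σ hσ τ hτ hblock
    by_contra hne
    refine (hsep σ hσ τ hτ hne).not_gt ((cheb_lt_iff hd).mpr fun i => ?_)
    have hσi := mem_Icc.mp (hrange σ hσ i)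
    have hτi := mem_Icc.mp (hrange τ hτ i)
    have := Nat.dist_lt_of_div_eq hd (congrFun hblock i)
    unfold Nat.dist at this ⊢
    omega
  calc #A ≤ #(Fintype.piFinset fun _ : Fin m => range q) := card_le_card_of_injOn block hmaps hinj
    _ = q ^ m := by simp [Fintype.card_piFinset]

def blockCode (d : ℕ) {q : ℕ} (b : Fin m → Fin q) : Fin m → ℕ :=
  fun j => b j * d + j + 1

theorem injective_blockCode {d q : ℕ} (hmd : m ≤ d) (b : Fin m → Fin q) :
    Function.Injective (blockCode d b) := by
  intro j j' h
  have h' : b j * d + (j : ℕ) = b j' * d + (j' : ℕ) := by simp only [blockCode] at h; omega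
  have hmod := congrArg (· % d) h'
  simp only [Nat.mul_add_mod_of_lt (show (j : ℕ) < d by omega),
    Nat.mul_add_mod_of_lt (show (j' : ℕ) < d by omega)] at hmod
  exact Fin.ext hmod

theorem blockCode_mem_Icc {d q : ℕ} (hmd : m ≤ d) (b : Fin m → Fin q) (j : Fin m) :
    blockCode d b j ∈ Icc 1 (q * d - (d - m)) := by
  have hb : (b j + 1) * d ≤ q * d := Nat.mul_le_mul_right d (b j).isLt
  rw [add_one_mul] at hb
  simp only [blockCode, mem_Icc]
  omega

theorem le_cheb_blockCode {d q : ℕ} {b b' : Fin m → Fin q} (h : b ≠ b') :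
    d ≤ cheb (blockCode d b) (blockCode d b') := by
  obtain ⟨j, hj⟩ := Function.ne_iff.mp h
  have hcheb := dist_le_cheb (blockCode d b) (blockCode d b') j
  simp only [blockCode, add_assoc] at hcheb
  exact (Nat.le_dist_mul_add d _ (Fin.val_injective.ne hj)).trans hcheb

theorem blockCode_injective {d q : ℕ} (hd : 0 < d) :
    Function.Injective (blockCode (m := m) (q := q) d) :=
  fun _ _ h => by_contra fun hne => (le_cheb_blockCode hne).not_gt (by rwa [h, cheb_self])

end Cheb

theorem isGreatest_card_code {N m q d : ℕ} (hd : 0 < d) (hmd : m ≤ d)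
    (hlo : q * d - (d - m) ≤ N) (hhi : N ≤ q * d) :
    IsGreatest {k | ∃ A : Finset (Fin m → ℕ),
      (∀ σ ∈ A, Function.Injective σ ∧ ∀ i, σ i ∈ Icc 1 N) ∧
      (∀ σ ∈ A, ∀ τ ∈ A, σ ≠ τ → d ≤ cheb σ τ) ∧ #A = k} (q ^ m) := by
  refine ⟨⟨univ.image (blockCode (q := q) d), ?_, ?_, ?_⟩, ?_⟩
  · simp only [mem_image, mem_univ, true_and, forall_exists_index, forall_apply_eq_imp_iff]
    exact fun b => ⟨injective_blockCode hmd b, fun j =>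
      Icc_subset_Icc_right hlo (blockCode_mem_Icc hmd b j)⟩
  · simp only [mem_image, mem_univ, true_and, forall_exists_index, forall_apply_eq_imp_iff]
    exact fun b b' hne => le_cheb_blockCode fun h => hne (by rw [h])
  · simp [card_image_of_injective _ (blockCode_injective hd)]
  · rintro k ⟨A, hA, hsep, rfl⟩
    exact card_le_pow_of_le_cheb hd hhi (fun σ hσ => (hA σ hσ).2) hsep

theorem stmt19_general (n m d : ℕ) (hdvd : d ∣ n) (hd : 1 ≤ d)
    (hmd : m ≤ d) :
    ∀ i : ℕ, i ≤ d - m → Pnm (n - i) m d = (n / d) ^ m := by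
  intro i hi
  obtain ⟨q, rfl⟩ := hdvd
  rw [Nat.mul_div_cancel_left q hd, mul_comm d q]
  exact (isGreatest_card_code hd hmd (by omega) (by omega)).csSup_eq

/-- If `d ∣ n` (with `n ≥ d ≥ 1`) and `d ≥ m ≥ 2`, then for every `i` with
`0 ≤ i ≤ d − m`, `P(n − i, m, d) = (n/d)^m`. -/
theorem stmt19 (n m d : ℕ) (hdvd : d ∣ n) (hd : 1 ≤ d) (hdn : d ≤ n)
    (hm : 2 ≤ m) (hmd : m ≤ d) :
    ∀ i : ℕ, i ≤ d - m → Pnm (n - i) m d = (n / d) ^ m :=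
  stmt19_general n m d hdvd hd hmd
end
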